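/- Let V : [0, ∞) → R_{≥0} be differentiable with V(0) = V_0 > 0, and suppose V'(t) ≤ −γ·(M·V(t)^m + N·V(t)^{n'})^k whenever V(t) > 0, where γ = Γ((1−km)/(n'−m))·Γ((kn'−1)/(n'−m)) / (T_s·M^k·Γ(k)·(n'−m)) · (M/N)^{(1−km)/(n'−m)}, with M, N, m, n', k > 0, k·m < 1, k·n' > 1, and T_s > 0. Then V(t) = 0 for all t ≥ T_s. -/

import Mathlib

open Real MeasureTheory Set Filter Topology

/-!
Put `φ v = (M v^m + N v^{n'})^k` and `G v = ∫₀^v dz / φ z`. While `V > 0` the hypothesis makes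
`G (V t) + γ t` nonincreasing, and `G (V 0) ≤ ∫₀^∞ dz / φ z = γ T_s`; so `V` cannot stay positive
on `[0, T_s]`, and once it vanishes it stays zero because `V' ≤ 0` wherever `V > 0`.
The value of `∫₀^∞ dz / φ z` is a Beta integral: substituting `u = z^{n'-m}` and rescaling `u` by
`M / N` turns it into `∫₀^∞ u^{a-1} (1 + u)^{-k} du = Γ(a) Γ(k-a) / Γ(k)`, `a = (1-km)/(n'-m)`.
-/

theorem Real.integral_rpow_mul_one_sub_rpow {a b : ℝ} (ha : 0 < a) (hb : 0 < b) :
    ∫ x in (0 : ℝ)..1, x ^ (a - 1) * (1 - x) ^ (b - 1) = Gamma a * Gamma b / Gamma (a + b) := by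
  have h := Complex.betaIntegral_eq_Gamma_mul_div a b (by simpa using ha) (by simpa using hb)
  rw [Complex.betaIntegral, ← Complex.ofReal_add, Complex.Gamma_ofReal, Complex.Gamma_ofReal,
    Complex.Gamma_ofReal, ← Complex.ofReal_mul, ← Complex.ofReal_div] at h
  rw [← Complex.ofReal_inj, ← intervalIntegral.integral_ofReal, ← h]
  refine intervalIntegral.integral_congr fun x hx => ?_
  rw [uIcc_of_le zero_le_one] at hx
  push_cast
  rw [Complex.ofReal_cpow hx.1, Complex.ofReal_cpow (sub_nonneg.2 hx.2)]
  push_cast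
  rfl

theorem integral_Ioi_rpow_mul_one_add_rpow_eq {a b : ℝ} :
    ∫ t in Ioi (0 : ℝ), t ^ (a - 1) * (1 + t) ^ (-(a + b)) =
      ∫ x in (0 : ℝ)..1, x ^ (a - 1) * (1 - x) ^ (b - 1) := by
  set f : ℝ → ℝ := fun x => x / (1 - x)
  have himg : f '' Ioo 0 1 = Ioi 0 := by
    ext t
    refine ⟨?_, fun ht => ?_⟩
    · rintro ⟨x, hx, rfl⟩
      exact div_pos hx.1 (sub_pos.2 hx.2)
    · have ht : 0 < t := ht
      refine ⟨t / (1 + t), ⟨by positivity, by rw [div_lt_one (by positivity)]; linarith⟩, ?_⟩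
      simp only [f]
      field_simp
      ring
  have hderiv : ∀ x ∈ Ioo (0 : ℝ) 1, HasDerivWithinAt f (((1 - x) ^ 2)⁻¹) (Ioo 0 1) x := by
    intro x hx
    have hx1 : 1 - x ≠ 0 := (sub_pos.2 hx.2).ne'
    exact (((hasDerivAt_id' x).fun_div ((hasDerivAt_const x 1).fun_sub (hasDerivAt_id' x))
      hx1).congr_deriv (by ring)).hasDerivWithinAt
  have hinj : InjOn f (Ioo 0 1) := by
    intro x hx y hy hxy
    have := (sub_pos.2 hx.2).ne'
    have := (sub_pos.2 hy.2).ne'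
    simp only [f] at hxy
    field_simp at hxy
    linarith
  rw [← himg, integral_image_eq_integral_abs_deriv_smul measurableSet_Ioo hderiv hinj,
    intervalIntegral.integral_of_le zero_le_one, integral_Ioc_eq_integral_Ioo]
  refine setIntegral_congr_fun measurableSet_Ioo fun x hx => ?_
  have hx0 : 0 < x := hx.1
  have hx1 : 0 < 1 - x := sub_pos.2 hx.2
  have h1 : 1 + f x = (1 - x)⁻¹ := by
    simp only [f]
    field_simp
    ring
  simp only [f] at h1 ⊢
  rw [smul_eq_mul, h1, div_rpow hx0.le hx1.le, inv_rpow hx1.le, ← rpow_neg hx1.le, neg_neg,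
    abs_of_pos (by positivity), ← rpow_two, ← rpow_neg hx1.le, div_eq_mul_inv, ← rpow_neg hx1.le, mul_left_comm, ← mul_assoc, mul_assoc _ (_ ^ _),
    ← rpow_add hx1, mul_assoc, ← rpow_add hx1]
  ring_nf

theorem integral_Ioi_rpow_mul_one_add_rpow {a b : ℝ} (ha : 0 < a) (hb : 0 < b) :
    ∫ t in Ioi (0 : ℝ), t ^ (a - 1) * (1 + t) ^ (-(a + b)) = Gamma a * Gamma b / Gamma (a + b) := by
  rw [integral_Ioi_rpow_mul_one_add_rpow_eq, Real.integral_rpow_mul_one_sub_rpow ha hb]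

theorem integral_Ioi_rpow_mul_add_mul_rpow {M N a b : ℝ} (hM : 0 < M) (hN : 0 < N) (ha : 0 < a)
    (hb : 0 < b) :
    ∫ u in Ioi (0 : ℝ), u ^ (a - 1) * (M + N * u) ^ (-(a + b)) =
      Gamma a * Gamma b / Gamma (a + b) * M ^ (-b) / N ^ a := by
  have hc : 0 < M / N := div_pos hM hN
  have hscale := integral_comp_mul_left_Ioi (fun u => u ^ (a - 1) * (M + N * u) ^ (-(a + b))) 0 hc
  rw [mul_zero, eq_inv_smul_iff₀ hc.ne'] at hscale
  have hpoint : ∀ x ∈ Ioi (0 : ℝ), (M / N * x) ^ (a - 1) * (M + N * (M / N * x)) ^ (-(a + b)) =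
      (M / N) ^ (a - 1) * M ^ (-(a + b)) * (x ^ (a - 1) * (1 + x) ^ (-(a + b))) := by
    intro x hx
    have hx : 0 < x := hx
    rw [show M + N * (M / N * x) = M * (1 + x) by field_simp, mul_rpow hc.le hx.le,
      mul_rpow hM.le (by positivity)]
    ring
  rw [← hscale, setIntegral_congr_fun measurableSet_Ioi hpoint, integral_const_mul,
    integral_Ioi_rpow_mul_one_add_rpow ha hb, smul_eq_mul, ← mul_assoc, ← mul_assoc,
    ← rpow_one_add' hc.le (by linarith), add_sub_cancel, div_rpow hM.le hN.le, rpow_neg hM.le,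
    rpow_neg hM.le, rpow_add hM]
  field_simp

theorem integral_Ioi_inv_mul_rpow_add_mul_rpow_rpow_eq_integral {M N m n' k : ℝ} (hM : 0 < M)
    (hN : 0 < N) (hmn : m < n') :
    ∫ z in Ioi (0 : ℝ), ((M * z ^ m + N * z ^ n') ^ k)⁻¹ =
      (n' - m)⁻¹ * ∫ u in Ioi (0 : ℝ), u ^ ((1 - k * m) / (n' - m) - 1) * (M + N * u) ^ (-k) := by
  set p := n' - m
  have hp : 0 < p := sub_pos.2 hmn
  rw [← integral_comp_rpow_Ioi (fun u => u ^ ((1 - k * m) / p - 1) * (M + N * u) ^ (-k)) hp.ne',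
    ← integral_const_mul]
  refine setIntegral_congr_fun measurableSet_Ioi fun z hz => ?_
  have hz : 0 < z := hz
  have hfactor : M * z ^ m + N * z ^ n' = z ^ m * (M + N * z ^ p) := by
    rw [mul_add, mul_left_comm, ← rpow_add hz, add_sub_cancel]
    ring
  have hexp : z ^ (p - 1) * (z ^ p) ^ ((1 - k * m) / p - 1) = z ^ (-(m * k)) := by
    rw [← rpow_mul hz.le, ← rpow_add hz]
    congr 1
    field_simp
    ring
  rw [hfactor, mul_rpow (by positivity) (by positivity), ← rpow_mul hz.le, mul_inv,
    ← rpow_neg hz.le, ← rpow_neg (by positivity), smul_eq_mul, abs_of_pos hp, ← hexp]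
  field_simp

theorem integral_Ioi_inv_mul_rpow_add_mul_rpow_rpow {M N m n' k : ℝ} (hM : 0 < M) (hN : 0 < N)
    (hk : 0 < k) (hkm : k * m < 1) (hkn : 1 < k * n') :
    ∫ z in Ioi (0 : ℝ), ((M * z ^ m + N * z ^ n') ^ k)⁻¹ =
      Gamma ((1 - k * m) / (n' - m)) * Gamma ((k * n' - 1) / (n' - m)) /
        (M ^ k * Gamma k * (n' - m)) * (M / N) ^ ((1 - k * m) / (n' - m)) := by
  have hp : 0 < n' - m := by nlinarith
  rw [integral_Ioi_inv_mul_rpow_add_mul_rpow_rpow_eq_integral hM hN (by linarith)]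
  set a := (1 - k * m) / (n' - m)
  set b := (k * n' - 1) / (n' - m)
  have ha : 0 < a := div_pos (by linarith) hp
  have hb : 0 < b := div_pos (by linarith) hp
  have hab : a + b = k := by
    simp only [a, b]
    field_simp
    ring
  clear_value a b
  subst hab
  rw [integral_Ioi_rpow_mul_add_mul_rpow hM hN ha hb, rpow_add hM, rpow_neg hM.le,
    div_rpow hM.le hN.le]
  have := Gamma_pos_of_pos (add_pos ha hb)
  field_simp

theorem continuousOn_mul_rpow_add_mul_rpow_rpow {M N m n' k : ℝ} (hk : 0 ≤ k) :
    ContinuousOn (fun z => (M * z ^ m + N * z ^ n') ^ k) (Ioi 0) := fun z (hz : 0 < z) =>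
  ContinuousAt.continuousWithinAt <| by
    fun_prop (disch := first | exact Or.inl hz.ne' | exact Or.inr hk)

theorem integrableOn_Ioi_inv_mul_rpow_add_mul_rpow_rpow {M N m n' k : ℝ} (hM : 0 < M)
    (hN : 0 < N) (hk : 0 < k) (hkm : k * m < 1) (hkn : 1 < k * n') :
    IntegrableOn (fun z => ((M * z ^ m + N * z ^ n') ^ k)⁻¹) (Ioi 0) := by
  have hbound : ∀ {C r A z : ℝ}, 0 < C → 0 < z → 0 ≤ A →
      ‖((C * z ^ r + A) ^ k)⁻¹‖ ≤ C ^ (-k) * ‖z ^ (-(r * k))‖ := by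
    intro C r A z hC hz hA
    have hCz : 0 < C * z ^ r := by positivity
    rw [norm_of_nonneg (by positivity), norm_of_nonneg (by positivity)]
    calc ((C * z ^ r + A) ^ k)⁻¹ ≤ ((C * z ^ r) ^ k)⁻¹ := by gcongr; linarith
      _ = C ^ (-k) * z ^ (-(r * k)) := by
        rw [← rpow_neg hCz.le, mul_rpow hC.le (by positivity), ← rpow_mul hz.le, mul_neg]
  have hcont : ContinuousOn (fun z => ((M * z ^ m + N * z ^ n') ^ k)⁻¹) (Ioi 0) :=
    (continuousOn_mul_rpow_add_mul_rpow_rpow hk.le).inv₀ fun z (hz : 0 < z) => by positivity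
  have hzero : (fun z => ((M * z ^ m + N * z ^ n') ^ k)⁻¹) =O[𝓝[>] 0] (· ^ (-(m * k))) :=
    .of_bound _ <| eventually_mem_nhdsWithin.mono fun z (hz : 0 < z) => hbound hM hz (by positivity)
  have htop : (fun z => ((M * z ^ m + N * z ^ n') ^ k)⁻¹) =O[atTop] (· ^ (-(n' * k))) :=
    .of_bound _ <| (eventually_gt_atTop 0).mono fun z hz => by
      rw [add_comm]; exact hbound hN hz (by positivity)
  simpa using mellin_convergent_of_isBigO_scalar (s := 1)
    (hcont.locallyIntegrableOn measurableSet_Ioi) htop (by linarith) hzero (by linarith)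

theorem eq_zero_of_le_of_deriv_nonpos {V : ℝ → ℝ} {t₀ t : ℝ} (hV : Differentiable ℝ V)
    (hVnn : ∀ t, 0 ≤ V t) (h₀ : V t₀ = 0) (hderiv : ∀ t, t₀ < t → 0 < V t → deriv V t ≤ 0)
    (ht : t₀ ≤ t) : V t = 0 := by
  by_contra hne
  have hVt : 0 < V t := (hVnn t).lt_of_ne' hne
  obtain ⟨s, ⟨⟨hs₀, hst⟩, hVs⟩, hs_max⟩ :=
    (isCompact_Icc.inter_right (isClosed_singleton.preimage hV.continuous)).exists_isGreatest
      (⟨t₀, ⟨le_rfl, ht⟩, h₀⟩ : (Icc t₀ t ∩ V ⁻¹' {0}).Nonempty)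
  have hVs : V s = 0 := hVs
  have hst : s < t := hst.lt_of_ne (by rintro rfl; exact hne hVs)
  have hpos : ∀ u ∈ Ioc s t, 0 < V u := fun u hu =>
    (hVnn u).lt_of_ne' fun h => (hu.1.trans_le (hs_max ⟨⟨hs₀.trans hu.1.le, hu.2⟩, h⟩)).false
  obtain ⟨c, hc, hslope⟩ :=
    exists_deriv_eq_slope V hst hV.continuous.continuousOn hV.differentiableOn
  have hc_deriv := hderiv c (hs₀.trans_lt hc.1) (hpos c ⟨hc.1, hc.2.le⟩)
  rw [hslope, hVs, sub_zero, div_nonpos_iff] at hc_deriv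
  rcases hc_deriv with h | h <;> linarith [h.1, h.2]

theorem antitoneOn_intervalIntegral_inv_comp_add_mul {φ V : ℝ → ℝ} {γ a b : ℝ}
    (hφ_cont : ContinuousOn φ (Ioi 0)) (hφ_pos : ∀ v, 0 < v → 0 < φ v)
    (hφ_int : IntegrableOn (fun v => (φ v)⁻¹) (Ioi 0)) (hV : Differentiable ℝ V)
    (hpos : ∀ t ∈ Icc a b, 0 < V t) (hderiv : ∀ t ∈ Ioo a b, deriv V t ≤ -γ * φ (V t)) :
    AntitoneOn (fun t => (∫ v in (0 : ℝ)..V t, (φ v)⁻¹) + γ * t) (Icc a b) := by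
  have hφ_inv : ContinuousOn (fun v => (φ v)⁻¹) (Ioi 0) :=
    hφ_cont.inv₀ fun v hv => (hφ_pos v hv).ne'
  have hG : ∀ v, 0 < v → HasDerivAt (fun w => ∫ u in (0 : ℝ)..w, (φ u)⁻¹) (φ v)⁻¹ v :=
    fun v hv => intervalIntegral.integral_hasDerivAt_right
      ((intervalIntegrable_iff_integrableOn_Ioc_of_le hv.le).2
        (hφ_int.mono_set Ioc_subset_Ioi_self))
      (hφ_inv.stronglyMeasurableAtFilter isOpen_Ioi v hv) (hφ_inv.continuousAt (Ioi_mem_nhds hv))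
  have hderivh : ∀ t ∈ Icc a b, HasDerivAt (fun t => (∫ v in (0 : ℝ)..V t, (φ v)⁻¹) + γ * t)
      ((φ (V t))⁻¹ * deriv V t + γ) t := fun t ht =>
    ((hG _ (hpos t ht)).comp t (hV t).hasDerivAt).add (by simpa using (hasDerivAt_id t).const_mul γ)
  refine antitoneOn_of_hasDerivWithinAt_nonpos (convex_Icc a b)
    (fun t ht => (hderivh t ht).continuousAt.continuousWithinAt)
    (fun t ht => (hderivh t (interior_subset ht)).hasDerivWithinAt) fun t ht => ?_
  rw [interior_Icc] at ht
  have hφt := hφ_pos _ (hpos t (Ioo_subset_Icc_self ht))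
  have := mul_le_mul_of_nonneg_left (hderiv t ht) (inv_pos.2 hφt).le
  rw [mul_left_comm, inv_mul_cancel₀ hφt.ne', mul_one] at this
  linarith

theorem exists_mem_Icc_eq_zero_of_deriv_le_neg_mul {φ V : ℝ → ℝ} {γ T : ℝ}
    (hφ_cont : ContinuousOn φ (Ioi 0)) (hφ_pos : ∀ v, 0 < v → 0 < φ v)
    (hφ_int : IntegrableOn (fun v => (φ v)⁻¹) (Ioi 0)) (hT : 0 ≤ T)
    (hI : ∫ v in Ioi (0 : ℝ), (φ v)⁻¹ ≤ γ * T) (hV : Differentiable ℝ V) (hVnn : ∀ t, 0 ≤ V t)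
    (hderiv : ∀ t, 0 ≤ t → 0 < V t → deriv V t ≤ -γ * φ (V t)) :
    ∃ t ∈ Icc 0 T, V t = 0 := by
  by_contra! hne
  have hpos : ∀ t ∈ Icc 0 T, 0 < V t := fun t ht => (hVnn t).lt_of_ne' (hne t ht)
  have hanti := antitoneOn_intervalIntegral_inv_comp_add_mul hφ_cont hφ_pos hφ_int hV hpos
    fun t ht => hderiv t ht.1.le (hpos t (Ioo_subset_Icc_self ht))
  have hdecr := hanti (left_mem_Icc.2 hT) (right_mem_Icc.2 hT) hT
  have hG_pos : 0 < ∫ v in (0 : ℝ)..V T, (φ v)⁻¹ :=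
    intervalIntegral.intervalIntegral_pos_of_pos_on
      ((intervalIntegrable_iff_integrableOn_Ioc_of_le (hVnn T)).2
        (hφ_int.mono_set Ioc_subset_Ioi_self))
      (fun v hv => inv_pos.2 (hφ_pos v hv.1)) (hpos T (right_mem_Icc.2 hT))
  have hG_le : ∫ v in (0 : ℝ)..V 0, (φ v)⁻¹ ≤ ∫ v in Ioi (0 : ℝ), (φ v)⁻¹ := by
    rw [intervalIntegral.integral_of_le (hVnn 0)]
    exact setIntegral_mono_set hφ_int
      ((ae_restrict_iff' measurableSet_Ioi).2 (.of_forall fun v hv => (inv_pos.2 (hφ_pos v hv)).le))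
      Ioc_subset_Ioi_self.eventuallyLE
  simp only [mul_zero, add_zero] at hdecr
  linarith

theorem eq_zero_of_deriv_le_neg_mul_of_integral_inv_le {φ V : ℝ → ℝ} {γ T : ℝ}
    (hφ_cont : ContinuousOn φ (Ioi 0)) (hφ_pos : ∀ v, 0 < v → 0 < φ v)
    (hφ_int : IntegrableOn (fun v => (φ v)⁻¹) (Ioi 0)) (hT : 0 < T)
    (hI : ∫ v in Ioi (0 : ℝ), (φ v)⁻¹ ≤ γ * T) (hV : Differentiable ℝ V) (hVnn : ∀ t, 0 ≤ V t)
    (hderiv : ∀ t, 0 ≤ t → 0 < V t → deriv V t ≤ -γ * φ (V t)) {t : ℝ} (ht : T ≤ t) :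
    V t = 0 := by
  obtain ⟨t₀, ht₀, hVt₀⟩ :=
    exists_mem_Icc_eq_zero_of_deriv_le_neg_mul hφ_cont hφ_pos hφ_int hT.le hI hV hVnn hderiv
  have hγ : 0 ≤ γ := nonneg_of_mul_nonneg_left
    ((setIntegral_nonneg measurableSet_Ioi fun v hv => (inv_pos.2 (hφ_pos v hv)).le).trans hI) hT
  refine eq_zero_of_le_of_deriv_nonpos hV hVnn hVt₀ (fun s hs hVs => ?_) (ht₀.2.trans ht)
  have := (hφ_pos _ hVs).le
  nlinarith [hderiv s (ht₀.1.trans hs.le) hVs]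

theorem predefined_time_explicit_gain_general (T_s : ℝ) (hT : 0 < T_s)
    (M N m n' k : ℝ) (hM : 0 < M) (hN : 0 < N) (hk : 0 < k)
    (hkm : k * m < 1) (hkn : 1 < k * n')
    (γ : ℝ)
    (hγ : γ = Real.Gamma ((1 - k * m) / (n' - m)) * Real.Gamma ((k * n' - 1) / (n' - m)) /
        (T_s * M ^ k * Real.Gamma k * (n' - m)) * (M / N) ^ ((1 - k * m) / (n' - m)))
    (V : ℝ → ℝ) (hVnn : ∀ t, 0 ≤ V t) (hdiff : Differentiable ℝ V)
    (hineq : ∀ t, 0 ≤ t → 0 < V t →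
      deriv V t ≤ -γ * (M * V t ^ m + N * V t ^ n') ^ k) :
    ∀ t, T_s ≤ t → V t = 0 := by
  have hγT : ∫ v in Ioi (0 : ℝ), ((M * v ^ m + N * v ^ n') ^ k)⁻¹ = γ * T_s := by
    rw [integral_Ioi_inv_mul_rpow_add_mul_rpow_rpow hM hN hk hkm hkn, hγ]
    have := (Gamma_pos_of_pos hk).ne'
    field_simp
  exact fun t ht => eq_zero_of_deriv_le_neg_mul_of_integral_inv_le
    (continuousOn_mul_rpow_add_mul_rpow_rpow hk.le) (fun v (hv : 0 < v) => by positivity)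
    (integrableOn_Ioi_inv_mul_rpow_add_mul_rpow_rpow hM hN hk hkm hkn) hT hγT.le hdiff hVnn hineq ht

/-- Predefined-time stability with the explicit Gamma-function gain (Lemma 3 of the paper):
if V̇ ≤ −γ·(M V^m + N V^{n'})^k with the stated γ, then V settles to zero within T_s. -/
theorem predefined_time_explicit_gain (T_s : ℝ) (hT : 0 < T_s)
    (M N m n' k : ℝ) (hM : 0 < M) (hN : 0 < N) (hm : 0 < m) (hn' : 0 < n') (hk : 0 < k)
    (hkm : k * m < 1) (hkn : 1 < k * n')
    (γ : ℝ)
    (hγ : γ = Real.Gamma ((1 - k * m) / (n' - m)) * Real.Gamma ((k * n' - 1) / (n' - m)) /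
        (T_s * M ^ k * Real.Gamma k * (n' - m)) * (M / N) ^ ((1 - k * m) / (n' - m)))
    (V : ℝ → ℝ) (hVnn : ∀ t, 0 ≤ V t) (hV0 : 0 < V 0) (hdiff : Differentiable ℝ V)
    (hineq : ∀ t, 0 ≤ t → 0 < V t →
      deriv V t ≤ -γ * (M * V t ^ m + N * V t ^ n') ^ k) :
    ∀ t, T_s ≤ t → V t = 0 :=
  predefined_time_explicit_gain_general T_s hT M N m n' k hM hN hk hkm hkn γ hγ V hVnn hdiff hineq
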